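/- arXiv:1507.07236 — 2 statements merged into one kernel-verified Lean document; each statement's English description precedes it below -/
import Mathlib

section
/- For every positive integer m, the map h/k ↦ (k-2h)/(2k-3h) (matrix [[-2,1],[-3,2]]) is an order-reversing bijection of F^{≤1/2}(B(2m),m) onto itself. -/
/-- The Farey sequence of order `n`, as the set of (automatically reduced)
rationals `h/k` with `0 ≤ h ≤ k ≤ n`. -/
def farey (n : ℕ) : Set ℚ := {q | 0 ≤ q ∧ q ≤ 1 ∧ q.den ≤ n}

/-- `F_n^m = {h/k ∈ F_n : h ≤ m}`. -/
def fareyF (n m : ℕ) : Set ℚ := {q ∈ farey n | q.num ≤ (m : ℤ)}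

/-- `G_n^m = {h/k ∈ F_n : m + k - n ≤ h}`. -/
def fareyG (n m : ℕ) : Set ℚ := {q ∈ farey n | (m : ℤ) + q.den - n ≤ q.num}

/-- `F(B(n),m) = {h/k ∈ F_n : m + k - n ≤ h ≤ m}`. -/
def fareyB (n m : ℕ) : Set ℚ :=
  {q ∈ farey n | (m : ℤ) + q.den - n ≤ q.num ∧ q.num ≤ (m : ℤ)}

/-!
Write `q = h/k` in lowest terms. The matrix `[[-2, 1], [-3, 2]]` has determinant `-1`, so it sends
the coprime pair `(h, k)` to the coprime pair `(k - 2h, 2k - 3h)`, which is therefore the reduced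
numerator and denominator of the image. Every defining inequality of `F^{≤1/2}(B(2m), m)` for the
image is then a linear consequence of those for `(h, k)`. The map is a Möbius involution, and it
is decreasing on `q < 2/3` because its determinant is negative.
-/

theorem IsCoprime.mul_add_mul_of_isUnit_det {R : Type*} [CommRing R] {h k : R} (a b c d : R)
    (hcop : IsCoprime h k) (hdet : IsUnit (a * d - b * c)) :
    IsCoprime (a * h + b * k) (c * h + d * k) := by
  obtain ⟨u, v, huv⟩ := hcop
  obtain ⟨e, he⟩ := hdet.exists_left_inv
  exact ⟨e * (u * d - v * c), e * (v * a - u * b),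
    by linear_combination e * (a * d - b * c) * huv + he⟩

theorem Rat.num_den_intCast_div_of_isCoprime {x y : ℤ} (hy : 0 < y) (hcop : IsCoprime x y) :
    ((x : ℚ) / y).num = x ∧ (((x : ℚ) / y).den : ℤ) = y := by
  have hcop' : Nat.Coprime x.natAbs y.natAbs := Int.isCoprime_iff_gcd_eq_one.mp hcop
  exact ⟨Rat.num_div_eq_of_coprime hy hcop', Rat.den_div_eq_of_coprime hy hcop'⟩

theorem Rat.num_den_moebius (a b c d : ℤ) (hdet : IsUnit (a * d - b * c)) (q : ℚ)
    (hpos : 0 < c * q.num + d * q.den) :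
    ((a * q + b) / (c * q + d)).num = a * q.num + b * q.den ∧
      (((a * q + b) / (c * q + d)).den : ℤ) = c * q.num + d * q.den := by
  have hval : (a * q + b) / (c * q + d) =
      ((a * q.num + b * q.den : ℤ) : ℚ) / ((c * q.num + d * q.den : ℤ) : ℚ) := by
    have hck : ((c * q.num + d * q.den : ℤ) : ℚ) ≠ 0 := by exact_mod_cast hpos.ne'
    conv_lhs => rw [← Rat.num_div_den q]
    push_cast at hck ⊢
    field_simp
  rw [hval]
  exact Rat.num_den_intCast_div_of_isCoprime hpos
    (IsCoprime.mul_add_mul_of_isUnit_det a b c d (Int.isCoprime_iff_gcd_eq_one.mpr q.reduced) hdet)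

theorem Rat.le_half_iff (q : ℚ) : q ≤ 1 / 2 ↔ 2 * q.num ≤ q.den := by
  rw [Rat.le_iff]
  norm_num
  omega

theorem num_den_one_sub_two_mul_div (q : ℚ) (hq : 2 * q.num ≤ q.den) :
    ((1 - 2 * q) / (2 - 3 * q)).num = q.den - 2 * q.num ∧
      (((1 - 2 * q) / (2 - 3 * q)).den : ℤ) = 2 * q.den - 3 * q.num := by
  have hden := q.den_pos
  have hval : (1 - 2 * q) / (2 - 3 * q) =
      (((-2 : ℤ) : ℚ) * q + (1 : ℤ)) / (((-3 : ℤ) : ℚ) * q + (2 : ℤ)) := by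
    push_cast
    ring
  have hmoebius := Rat.num_den_moebius (-2) 1 (-3) 2 (by norm_num) q (by omega)
  rw [hval]
  omega

theorem mem_fareyB_le_half_iff (n m : ℕ) (q : ℚ) :
    q ∈ {q ∈ fareyB n m | q ≤ 1 / 2} ↔
      0 ≤ q.num ∧ q.den ≤ n ∧ (m : ℤ) + q.den - n ≤ q.num ∧ q.num ≤ m ∧
        2 * q.num ≤ q.den := by
  simp only [fareyB, farey, Set.mem_ofPred_eq, ← Rat.num_nonneg, ← Rat.num_le_denom_iff,
    Rat.le_half_iff]
  omega

theorem mapsTo_fareyB_le_half (m : ℕ) :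
    Set.MapsTo (fun q : ℚ => (1 - 2 * q) / (2 - 3 * q))
      {q ∈ fareyB (2 * m) m | q ≤ 1 / 2} {q ∈ fareyB (2 * m) m | q ≤ 1 / 2} := by
  intro q hq
  rw [mem_fareyB_le_half_iff] at hq ⊢
  obtain ⟨hnum, hden⟩ := num_den_one_sub_two_mul_div q hq.2.2.2.2
  rw [hnum, ← Int.ofNat_le, hden]
  rw [← Int.ofNat_le] at hq
  push_cast at hq ⊢
  omega

theorem one_sub_two_mul_div_involutive (q : ℚ) (hq : q ≠ 2 / 3) :
    (1 - 2 * ((1 - 2 * q) / (2 - 3 * q))) / (2 - 3 * ((1 - 2 * q) / (2 - 3 * q))) = q := by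
  have hne : (2 : ℚ) - 3 * q ≠ 0 := by
    intro h; apply hq; linarith
  have hnum : 1 - 2 * ((1 - 2 * q) / (2 - 3 * q)) = q / (2 - 3 * q) := by
    rw [eq_div_iff hne, sub_mul, mul_assoc, div_mul_cancel₀ _ hne]
    ring
  have hden : 2 - 3 * ((1 - 2 * q) / (2 - 3 * q)) = 1 / (2 - 3 * q) := by
    rw [eq_div_iff hne, sub_mul, mul_assoc, div_mul_cancel₀ _ hne]
    ring
  rw [hnum, hden, div_div_div_cancel_right₀ hne, div_one]

theorem strictAntiOn_one_sub_two_mul_div :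
    StrictAntiOn (fun q : ℚ => (1 - 2 * q) / (2 - 3 * q)) (Set.Iio (2 / 3)) := by
  intro x hx y hy hxy
  simp only [Set.mem_Iio] at hx hy
  rw [div_lt_div_iff₀ (by linarith) (by linarith)]
  linarith

theorem stmt12_general (m : ℕ) :
    Set.BijOn (fun q : ℚ => (1 - 2 * q) / (2 - 3 * q))
      {q ∈ fareyB (2 * m) m | q ≤ 1 / 2} {q ∈ fareyB (2 * m) m | q ≤ 1 / 2} ∧
    ∀ x ∈ {q ∈ fareyB (2 * m) m | q ≤ 1 / 2},
      ∀ y ∈ {q ∈ fareyB (2 * m) m | q ≤ 1 / 2}, x < y →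
        (1 - 2 * y) / (2 - 3 * y) < (1 - 2 * x) / (2 - 3 * x) := by
  have hlt : ∀ q ∈ {q ∈ fareyB (2 * m) m | q ≤ 1 / 2}, q < 2 / 3 := fun q hq => by
    linarith [hq.2]
  have hinv : Set.InvOn (fun q : ℚ => (1 - 2 * q) / (2 - 3 * q))
      (fun q : ℚ => (1 - 2 * q) / (2 - 3 * q))
      {q ∈ fareyB (2 * m) m | q ≤ 1 / 2} {q ∈ fareyB (2 * m) m | q ≤ 1 / 2} :=
    ⟨fun q hq => one_sub_two_mul_div_involutive q (hlt q hq).ne,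
      fun q hq => one_sub_two_mul_div_involutive q (hlt q hq).ne⟩
  exact ⟨hinv.bijOn (mapsTo_fareyB_le_half m) (mapsTo_fareyB_le_half m),
    fun x hx y hy => strictAntiOn_one_sub_two_mul_div (hlt x hx) (hlt y hy)⟩

/-- `h/k ↦ (k-2h)/(2k-3h)`, i.e. `q ↦ (1-2q)/(2-3q)`, is an order-reversing
bijection of the lower half of `F(B(2m),m)` onto itself. -/
theorem stmt12 (m : ℕ) (hm : 0 < m) :
    Set.BijOn (fun q : ℚ => (1 - 2 * q) / (2 - 3 * q))
      {q ∈ fareyB (2 * m) m | q ≤ 1 / 2} {q ∈ fareyB (2 * m) m | q ≤ 1 / 2} ∧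
    ∀ x ∈ {q ∈ fareyB (2 * m) m | q ≤ 1 / 2},
      ∀ y ∈ {q ∈ fareyB (2 * m) m | q ≤ 1 / 2}, x < y →
        (1 - 2 * y) / (2 - 3 * y) < (1 - 2 * x) / (2 - 3 * x) :=
  stmt12_general m
end

section
/- Let m, n be positive integers with n ≥ 2m and s := ⌊log₂(n/m)⌋. Let M and N each be a product of s matrices, each factor being [[1,0],[1,1]] or [[0,1],[-1,2]]. Then the map [h;k] ↦ N·M⁻¹·[h;k] is an order-preserving bijection from the subsequence M·F_m of F_n onto the subsequence N·F_m of F_n, and the map [h;k] ↦ N·[[-1,1],[0,1]]·M⁻¹·[h;k] is an order-reversing bijection from M·F_m onto N·F_m. -/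
/-- Action of an integer 2×2 matrix on a fraction `h/k` written as the column
vector `[h; k]`. -/
def matAct (S : Matrix (Fin 2) (Fin 2) ℤ) (q : ℚ) : ℚ :=
  ((S 0 0 * q.num + S 0 1 * (q.den : ℤ) : ℤ) : ℚ) /
    ((S 1 0 * q.num + S 1 1 * (q.den : ℤ) : ℤ) : ℚ)

/-- The matrix `[[1,0],[1,1]]`. -/
def matA : Matrix (Fin 2) (Fin 2) ℤ := !![1, 0; 1, 1]

/-- The matrix `[[0,1],[-1,2]]`. -/
def matB : Matrix (Fin 2) (Fin 2) ℤ := !![0, 1; -1, 2]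

/-- The matrix `[[-1,1],[0,1]]`. -/
def matR : Matrix (Fin 2) (Fin 2) ℤ := !![-1, 1; 0, 1]

/-!
Products of `matA` and `matB` have determinant one and map `[0, 1]` into itself with positive
denominators, so their Möbius action is strictly increasing on `[0, 1]`. On `M·F_m`, the map
`N M⁻¹` is the transport of `q ↦ N q` along `M`, and `N R M⁻¹` that of `q ↦ N (1 - q)`
(`R` acts as `q ↦ 1 - q`). Since `q ↦ 1 - q` permutes `F_m`, both are bijections onto `N·F_m`,
increasing and decreasing respectively.
-/

open Set

section Order

variable {α β γ : Type*} {f : β → γ} {g : α → β} {h : α → γ} {s : Set α}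

theorem Set.bijOn_image_of_eqOn_comp (hh : InjOn h s) (hfgh : EqOn (f ∘ g) h s) :
    BijOn f (g '' s) (h '' s) := by
  rw [← image_congr hfgh, image_comp]
  exact (hh.congr hfgh.symm).image_of_comp.bijOn_image

variable [LinearOrder α] [Preorder β] [Preorder γ]

theorem StrictMonoOn.image_of_eqOn_comp (hg : StrictMonoOn g s) (hh : StrictMonoOn h s)
    (hfgh : EqOn (f ∘ g) h s) : StrictMonoOn f (g '' s) := by
  rintro _ ⟨a, ha, rfl⟩ _ ⟨b, hb, rfl⟩ hab
  rw [← Function.comp_apply (f := f), ← Function.comp_apply (f := f), hfgh ha, hfgh hb]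
  exact hh ha hb ((hg.lt_iff_lt ha hb).1 hab)

theorem StrictMonoOn.strictAntiOn_image_of_eqOn_comp (hg : StrictMonoOn g s)
    (hh : StrictAntiOn h s) (hfgh : EqOn (f ∘ g) h s) : StrictAntiOn f (g '' s) := by
  rintro _ ⟨a, ha, rfl⟩ _ ⟨b, hb, rfl⟩ hab
  rw [← Function.comp_apply (f := f), ← Function.comp_apply (f := f), hfgh ha, hfgh hb]
  exact hh ha hb ((hg.lt_iff_lt ha hb).1 hab)

end Order

def matDen (S : Matrix (Fin 2) (Fin 2) ℤ) (q : ℚ) : ℚ := S 1 0 * q + S 1 1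

theorem matAct_eq (S : Matrix (Fin 2) (Fin 2) ℤ) (q : ℚ) :
    matAct S q = (S 0 0 * q + S 0 1) / matDen S q := by
  have hden : (q.den : ℚ) ≠ 0 := by positivity
  rw [matAct, matDen]
  push_cast
  rw [← q.den_mul_eq_num, ← mul_div_mul_left _ (S 1 0 * q + S 1 1 : ℚ) hden]
  ring_nf

theorem matDen_mul (S T : Matrix (Fin 2) (Fin 2) ℤ) {q : ℚ} (hT : matDen T q ≠ 0) :
    matDen (S * T) q = matDen S (matAct T q) * matDen T q := by
  rw [matAct_eq]
  simp only [matDen, Matrix.mul_apply, Fin.sum_univ_two] at hT ⊢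
  push_cast
  field_simp
  ring

theorem matAct_mul (S T : Matrix (Fin 2) (Fin 2) ℤ) {q : ℚ} (hT : matDen T q ≠ 0) :
    matAct (S * T) q = matAct S (matAct T q) := by
  rw [matAct_eq, matDen_mul S T hT, matAct_eq S, matAct_eq T]
  simp only [matDen, Matrix.mul_apply, Fin.sum_univ_two] at hT ⊢
  push_cast
  field_simp
  ring

theorem matAct_sub_matAct (S : Matrix (Fin 2) (Fin 2) ℤ) {x y : ℚ} (hx : matDen S x ≠ 0)
    (hy : matDen S y ≠ 0) :
    matAct S y - matAct S x = S.det * (y - x) / (matDen S x * matDen S y) := by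
  rw [matAct_eq, matAct_eq, div_sub_div _ _ hy hx, Matrix.det_fin_two]
  simp only [matDen]
  push_cast
  ring

theorem strictMonoOn_matAct {S : Matrix (Fin 2) (Fin 2) ℤ} {s : Set ℚ} (hS : 0 < S.det)
    (hs : ∀ q ∈ s, 0 < matDen S q) : StrictMonoOn (matAct S) s := by
  intro x hx y hy hxy
  rw [← sub_pos, matAct_sub_matAct S (hs x hx).ne' (hs y hy).ne']
  exact div_pos (mul_pos (by exact_mod_cast hS) (sub_pos.2 hxy)) (mul_pos (hs x hx) (hs y hy))

theorem matAct_matR (q : ℚ) : matAct matR q = 1 - q := by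
  simp [matAct_eq, matDen, matR, neg_add_eq_sub]

def iccSubmonoid : Submonoid (Matrix (Fin 2) (Fin 2) ℤ) where
  carrier := {S | S.det = 1 ∧ ∀ q ∈ Icc (0 : ℚ) 1, 0 < matDen S q ∧ matAct S q ∈ Icc 0 1}
  one_mem' := ⟨Matrix.det_one, fun q hq => by simpa [matDen, matAct_eq] using hq⟩
  mul_mem' := by
    rintro S T ⟨hSdet, hS⟩ ⟨hTdet, hT⟩
    refine ⟨by rw [Matrix.det_mul, hSdet, hTdet, one_mul], fun q hq => ?_⟩
    obtain ⟨hTq, hTq'⟩ := hT q hq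
    obtain ⟨hSq, hSq'⟩ := hS _ hTq'
    rw [matDen_mul S T hTq.ne', matAct_mul S T hTq.ne']
    exact ⟨mul_pos hSq hTq, hSq'⟩

theorem matA_mem_iccSubmonoid : matA ∈ iccSubmonoid := by
  refine ⟨by simp [matA, Matrix.det_fin_two], fun q ⟨hq0, hq1⟩ => ?_⟩
  have hden : matDen matA q = q + 1 := by simp [matDen, matA]
  rw [matAct_eq, hden, show (matA 0 0 * q + matA 0 1 : ℚ) = q by simp [matA]]
  exact ⟨by linarith, div_nonneg (by linarith) (by linarith),
    (div_le_one (by linarith)).2 (by linarith)⟩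

theorem matB_mem_iccSubmonoid : matB ∈ iccSubmonoid := by
  refine ⟨by simp [matB, Matrix.det_fin_two], fun q ⟨hq0, hq1⟩ => ?_⟩
  have hden : matDen matB q = 2 - q := by simp [matDen, matB, sub_eq_neg_add]
  rw [matAct_eq, hden, show (matB 0 0 * q + matB 0 1 : ℚ) = 1 by simp [matB]]
  exact ⟨by linarith, div_nonneg (by linarith) (by linarith),
    (div_le_one (by linarith)).2 (by linarith)⟩

theorem list_prod_mem_iccSubmonoid {L : List (Matrix (Fin 2) (Fin 2) ℤ)}
    (hL : ∀ X ∈ L, X = matA ∨ X = matB) : L.prod ∈ iccSubmonoid :=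
  Submonoid.list_prod_mem _ fun X hX => (hL X hX).elim
    (fun h => h ▸ matA_mem_iccSubmonoid) (fun h => h ▸ matB_mem_iccSubmonoid)

theorem strictMonoOn_matAct_of_mem_iccSubmonoid {S : Matrix (Fin 2) (Fin 2) ℤ}
    (hS : S ∈ iccSubmonoid) : StrictMonoOn (matAct S) (Icc 0 1) :=
  strictMonoOn_matAct (hS.1 ▸ one_pos) fun q hq => (hS.2 q hq).1

theorem matAct_mul_inv_matAct (S : Matrix (Fin 2) (Fin 2) ℤ) {T : Matrix (Fin 2) (Fin 2) ℤ}
    (hT : T.det = 1) {q : ℚ} (hq : matDen T q ≠ 0) :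
    matAct (S * T⁻¹) (matAct T q) = matAct S q := by
  rw [← matAct_mul _ _ hq, mul_assoc, Matrix.nonsing_inv_mul _ (hT ▸ isUnit_one), mul_one]

theorem farey_subset_Icc (m : ℕ) : farey m ⊆ Icc 0 1 := fun _ hq => ⟨hq.1, hq.2.1⟩

theorem mapsTo_one_sub_farey (m : ℕ) : MapsTo (1 - ·) (farey m) (farey m) := by
  rintro q ⟨hq0, hq1, hqm⟩
  have hden : (1 - q).den = q.den := by exact_mod_cast Rat.intCast_sub_den 1 q
  exact ⟨by linarith, by linarith, hden ▸ hqm⟩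

theorem image_one_sub_farey (m : ℕ) : (1 - ·) '' farey m = farey m :=
  (mapsTo_one_sub_farey m).image_subset.antisymm fun q hq =>
    ⟨1 - q, mapsTo_one_sub_farey m hq, sub_sub_cancel 1 q⟩

theorem stmt16_general (m : ℕ)
    (LM LN : List (Matrix (Fin 2) (Fin 2) ℤ))
    (hLMmem : ∀ X ∈ LM, X = matA ∨ X = matB)
    (hLNmem : ∀ X ∈ LN, X = matA ∨ X = matB) :
    Set.BijOn (matAct (LN.prod * (LM.prod)⁻¹))
      (matAct LM.prod '' farey m) (matAct LN.prod '' farey m) ∧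
    (∀ x ∈ matAct LM.prod '' farey m, ∀ y ∈ matAct LM.prod '' farey m,
      x < y → matAct (LN.prod * (LM.prod)⁻¹) x <
        matAct (LN.prod * (LM.prod)⁻¹) y) ∧
    Set.BijOn (matAct (LN.prod * matR * (LM.prod)⁻¹))
      (matAct LM.prod '' farey m) (matAct LN.prod '' farey m) ∧
    (∀ x ∈ matAct LM.prod '' farey m, ∀ y ∈ matAct LM.prod '' farey m,
      x < y → matAct (LN.prod * matR * (LM.prod)⁻¹) y <
        matAct (LN.prod * matR * (LM.prod)⁻¹) x) := by
  set M := LM.prod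
  set N := LN.prod
  have hM := list_prod_mem_iccSubmonoid hLMmem
  have hMmono := (strictMonoOn_matAct_of_mem_iccSubmonoid hM).mono (farey_subset_Icc m)
  have hNmono := (strictMonoOn_matAct_of_mem_iccSubmonoid
    (list_prod_mem_iccSubmonoid hLNmem)).mono (farey_subset_Icc m)
  have hNanti : StrictAntiOn (matAct N ∘ (1 - ·)) (farey m) :=
    hNmono.comp_strictAntiOn (fun _ _ _ _ h => sub_lt_sub_left h 1) (mapsTo_one_sub_farey m)
  have hMden : ∀ q ∈ farey m, matDen M q ≠ 0 := fun q hq =>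
    (hM.2 q (farey_subset_Icc m hq)).1.ne'
  have hcomp : EqOn (matAct (N * M⁻¹) ∘ matAct M) (matAct N) (farey m) := fun q hq =>
    matAct_mul_inv_matAct N hM.1 (hMden q hq)
  have hcompR : EqOn (matAct (N * matR * M⁻¹) ∘ matAct M) (matAct N ∘ (1 - ·)) (farey m) :=
    fun q hq => by
      rw [Function.comp_apply, matAct_mul_inv_matAct _ hM.1 (hMden q hq),
        matAct_mul _ _ (by simp [matDen, matR]), matAct_matR, Function.comp_apply]
  have hNimage : matAct N '' farey m = (matAct N ∘ (1 - ·)) '' farey m := by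
    rw [image_comp, image_one_sub_farey]
  refine ⟨bijOn_image_of_eqOn_comp hNmono.injOn hcomp, hMmono.image_of_eqOn_comp hNmono hcomp,
    ?_, hMmono.strictAntiOn_image_of_eqOn_comp hNanti hcompR⟩
  rw [hNimage]
  exact bijOn_image_of_eqOn_comp hNanti.injOn hcompR

/-- Theorem `th:7`, first two claims. -/
theorem stmt16 (m n : ℕ) (hm : 0 < m) (hn : 2 * m ≤ n)
    (LM LN : List (Matrix (Fin 2) (Fin 2) ℤ))
    (hLM : LM.length = Nat.log 2 (n / m))
    (hLN : LN.length = Nat.log 2 (n / m))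
    (hLMmem : ∀ X ∈ LM, X = matA ∨ X = matB)
    (hLNmem : ∀ X ∈ LN, X = matA ∨ X = matB) :
    Set.BijOn (matAct (LN.prod * (LM.prod)⁻¹))
      (matAct LM.prod '' farey m) (matAct LN.prod '' farey m) ∧
    (∀ x ∈ matAct LM.prod '' farey m, ∀ y ∈ matAct LM.prod '' farey m,
      x < y → matAct (LN.prod * (LM.prod)⁻¹) x <
        matAct (LN.prod * (LM.prod)⁻¹) y) ∧
    Set.BijOn (matAct (LN.prod * matR * (LM.prod)⁻¹))
      (matAct LM.prod '' farey m) (matAct LN.prod '' farey m) ∧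
    (∀ x ∈ matAct LM.prod '' farey m, ∀ y ∈ matAct LM.prod '' farey m,
      x < y → matAct (LN.prod * matR * (LM.prod)⁻¹) y <
        matAct (LN.prod * matR * (LM.prod)⁻¹) x) :=
  stmt16_general m LM LN hLMmem hLNmem
end
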